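/- arXiv:1010.5816 — 4 statements merged into one kernel-verified Lean document; each statement's English description precedes it below -/
import Mathlib

section
/- The three sequences (2⌊φn⌋+2)_{n≥1}, (2⌊φ²n⌋+2)_{n≥1}, and (2n+1)_{n≥1} form an exact cover of {3,4,5,...}: every integer m ≥ 3 occurs exactly once in exactly one of these three sequences. -/
noncomputable def goldenPhi : ℝ := (1 + Real.sqrt 5) / 2

/-- The three sequences, indexed by `Fin 3`, each with index n ≥ 1. -/
noncomputable def threeSeq : Fin 3 → ℕ → ℕ
  | 0, n => 2 * ⌊goldenPhi * n⌋₊ + 2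
  | 1, n => 2 * ⌊goldenPhi ^ 2 * n⌋₊ + 2
  | 2, n => 2 * n + 1

/-!
Odd numbers `m ≥ 3` are exactly the values `2n + 1`, `n ≥ 1`, and the even ones are `2k + 2`
with `k ≥ 1`. Since `1/φ + 1/φ² = 1` and `φ` is irrational, Rayleigh's theorem says that the
Beatty sequences `⌊φn⌋` and `⌊φ²n⌋` partition the positive integers, each hitting its values
only once because they are strictly increasing; so every such `k` is hit exactly once.
-/

open Real
open scoped symmDiff

theorem Real.holderConjugate_goldenRatio_sq : goldenRatio.HolderConjugate (goldenRatio ^ 2) := by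
  rw [holderConjugate_iff, ← inv_pow, inv_goldenRatio, neg_sq, goldenConj_sq]
  exact ⟨one_lt_goldenRatio, by ring⟩

theorem Nat.floor_mul_strictMono {c : ℝ} (hc : 1 ≤ c) : StrictMono fun n : ℕ ↦ ⌊c * n⌋₊ := by
  refine strictMono_nat_of_lt_succ fun n ↦ ?_
  have hcn : 0 ≤ c * n := by positivity
  calc ⌊c * n⌋₊ < ⌊c * n + 1⌋₊ := by rw [Nat.floor_add_one hcn]; exact Nat.lt_succ_self _
    _ ≤ ⌊c * ↑(n + 1)⌋₊ := Nat.floor_le_floor (by push_cast; linarith)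

theorem mem_beattySeq_pos_iff {r : ℝ} (hr : 0 ≤ r) (k : ℕ) :
    (k : ℤ) ∈ {beattySeq r n | n > 0} ↔ ∃ n : ℕ, 0 < n ∧ ⌊r * n⌋₊ = k := by
  constructor
  · rintro ⟨n, hn, hk⟩
    lift n to ℕ using hn.le
    refine ⟨n, by exact_mod_cast hn, ?_⟩
    rw [beattySeq, mul_comm, Int.cast_natCast, ← Int.natCast_floor_eq_floor (by positivity)] at hk
    exact_mod_cast hk
  · rintro ⟨n, hn, rfl⟩
    refine ⟨n, by exact_mod_cast hn, ?_⟩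
    rw [beattySeq, mul_comm, Int.cast_natCast, Int.natCast_floor_eq_floor (by positivity)]

theorem Irrational.xor_exists_natFloor_mul {r s : ℝ} (hrs : r.HolderConjugate s)
    (hr : Irrational r) {k : ℕ} (hk : 0 < k) :
    Xor (∃ n : ℕ, 0 < n ∧ ⌊r * n⌋₊ = k) (∃ n : ℕ, 0 < n ∧ ⌊s * n⌋₊ = k) := by
  have hmem : (k : ℤ) ∈ {beattySeq r n | n > 0} ∆ {beattySeq s n | n > 0} := by
    rw [hr.beattySeq_symmDiff_beattySeq_pos hrs]
    exact Int.natCast_pos.mpr hk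
  rwa [Set.mem_symmDiff, mem_beattySeq_pos_iff hrs.nonneg,
    mem_beattySeq_pos_iff hrs.symm.nonneg] at hmem

theorem Irrational.existsUnique_natFloor_mul {r s : ℝ} (hrs : r.HolderConjugate s)
    (hr : Irrational r) {k : ℕ} (hk : 0 < k) :
    ∃! p : Fin 2 × ℕ, 0 < p.2 ∧ ⌊![r, s] p.1 * p.2⌋₊ = k := by
  have hinj (i : Fin 2) : Function.Injective fun n : ℕ ↦ ⌊![r, s] i * n⌋₊ := by
    fin_cases i
    exacts [(Nat.floor_mul_strictMono hrs.lt.le).injective,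
      (Nat.floor_mul_strictMono hrs.symm.lt.le).injective]
  obtain ⟨hcover, hdisj⟩ := (xor_iff_or_and_not_and _ _).mp (hr.xor_exists_natFloor_mul hrs hk)
  refine existsUnique_of_exists_of_unique ?_ ?_
  · rcases hcover with ⟨n, hn⟩ | ⟨n, hn⟩
    exacts [⟨(0, n), hn⟩, ⟨(1, n), hn⟩]
  rintro ⟨i, n⟩ ⟨j, q⟩ ⟨hn0, hn : ⌊![r, s] i * n⌋₊ = k⟩ ⟨hq0, hq : ⌊![r, s] j * q⌋₊ = k⟩
  obtain rfl : i = j := by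
    fin_cases i <;> fin_cases j
    exacts [rfl, (hdisj ⟨⟨n, hn0, hn⟩, q, hq0, hq⟩).elim,
      (hdisj ⟨⟨q, hq0, hq⟩, n, hn0, hn⟩).elim, rfl]
  exact Prod.ext rfl (hinj i (hn.trans hq.symm))

theorem existsUnique_lastCases_of_existsUnique {n : ℕ} (a : Fin n → ℕ → ℕ)
    (ha : ∀ k, 0 < k → ∃! p : Fin n × ℕ, 0 < p.2 ∧ a p.1 p.2 = k) {m : ℕ} (hm : 3 ≤ m) :
    ∃! p : Fin (n + 1) × ℕ, 0 < p.2 ∧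
      Fin.lastCases (fun q ↦ 2 * q + 1) (fun i q ↦ 2 * a i q + 2) p.1 p.2 = m := by
  rcases Nat.even_or_odd' m with ⟨k, rfl | rfl⟩
  · obtain ⟨⟨i, q⟩, ⟨hq, hiq : a i q = k - 1⟩, huniq⟩ := ha (k - 1) (by omega)
    refine ⟨(i.castSucc, q), ⟨hq, by simp only [Fin.lastCases_castSucc]; omega⟩, ?_⟩
    rintro ⟨j, q'⟩ ⟨hq', h⟩
    induction j using Fin.lastCases with
    | last => simp only [Fin.lastCases_last] at h; omega
    | cast j =>
      simp only [Fin.lastCases_castSucc] at h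
      exact congrArg (Prod.map Fin.castSucc id)
        (huniq (j, q') ⟨hq', show a j q' = k - 1 by omega⟩)
  · refine ⟨(Fin.last n, k), ⟨by omega, by simp⟩, ?_⟩
    rintro ⟨j, q⟩ ⟨hq, h⟩
    induction j using Fin.lastCases with
    | last => simp only [Fin.lastCases_last] at h; exact Prod.ext rfl (by omega)
    | cast j => simp only [Fin.lastCases_castSucc] at h; omega

theorem threeSeq_eq_lastCases :
    threeSeq = Fin.lastCases (fun q ↦ 2 * q + 1)
      (fun i q ↦ 2 * ⌊![goldenRatio, goldenRatio ^ 2] i * q⌋₊ + 2) := by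
  funext i q
  fin_cases i <;> rfl

/-- Every integer m ≥ 3 occurs exactly once in total among the three sequences
(2⌊φn⌋+2), (2⌊φ²n⌋+2), (2n+1), n ≥ 1. -/
theorem exact_cover_three :
    ∀ m : ℕ, 3 ≤ m → ∃! p : Fin 3 × ℕ, 0 < p.2 ∧ threeSeq p.1 p.2 = m := by
  intro m hm
  rw [threeSeq_eq_lastCases]
  refine existsUnique_lastCases_of_existsUnique _ (fun k hk ↦ ?_) hm
  exact goldenRatio_irrational.existsUnique_natFloor_mul holderConjugate_goldenRatio_sq hk
end

section
/- Let T(k) = {(x,y) ∈ ℕ₀×ℕ₀ : min(x,y) ≤ max(x,y) < k − 2·min(x,y)} (as a set of ordered pairs, symmetric in x and y). For m ∈ ℕ₀: if k = 3m+1 then #T(k) = 3(m+1)² − 2(m+1); if k = 3m+2 then #T(k) = 3(m+1)²; if k = 3(m+1) then #T(k) = 3(m+1)² + 2(m+1). -/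
/-!
Peeling off the pairs with a zero coordinate is the same as lowering `k` by three: the map
`(x, y) ↦ (x + 1, y + 1)` is a bijection from `T(k - 3)` onto the pairs of `T(k)` with positive
minimum, while the pairs of `T(k)` with minimum `0` form the hook `max(x, y) < k` of size `2k - 1`.
Hence `#T(k) = #T(k - 3) + 2k - 1`, and the three formulas follow by induction on `m`.
-/

def terminalSet (k : ℕ) : Set (ℕ × ℕ) :=
  {p | (max p.1 p.2 : ℤ) < (k : ℤ) - 2 * min p.1 p.2}

open Finset

lemma mem_terminalSet_iff {k : ℕ} {p : ℕ × ℕ} :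
    p ∈ terminalSet k ↔ max p.1 p.2 + 2 * min p.1 p.2 < k := by
  simp only [terminalSet, Set.mem_ofPred_eq]
  omega

lemma terminalSet_zero : terminalSet 0 = ∅ := by
  ext p
  simp [mem_terminalSet_iff]

lemma terminalSet_finite (k : ℕ) : (terminalSet k).Finite := by
  refine (finite_toSet (range k ×ˢ range k)).subset fun p hp => ?_
  rw [mem_terminalSet_iff] at hp
  simp only [coe_product, coe_range, Set.mem_prod, Set.mem_Iio]
  omega

def hook (n : ℕ) : Finset (ℕ × ℕ) :=
  range n ×ˢ {0} ∪ {0} ×ˢ Ico 1 n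

lemma card_hook (n : ℕ) : (hook n).card = 2 * n - 1 := by
  have hdisj : Disjoint (range n ×ˢ {0}) ({0} ×ˢ Ico 1 n) := by
    rw [disjoint_left]
    rintro ⟨x, y⟩ h₁ h₂
    simp only [mem_product, mem_range, mem_singleton, mem_Ico] at h₁ h₂
    omega
  rw [hook, card_union_of_disjoint hdisj, card_product, card_product, card_range,
    card_singleton, Nat.card_Ico]
  omega

lemma terminalSet_eq_image_union_hook (k : ℕ) :
    terminalSet k = Prod.map Nat.succ Nat.succ '' terminalSet (k - 3) ∪ ↑(hook k) := by
  ext ⟨x, y⟩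
  simp only [Set.mem_union, Set.mem_image, mem_terminalSet_iff, Prod.exists, Prod.map,
    Prod.mk.injEq, hook, coe_union, coe_product, coe_range, coe_singleton, coe_Ico,
    Set.mem_prod, Set.mem_Iio, Set.mem_singleton_iff, Set.mem_Ico]
  constructor
  · intro h
    rcases Nat.eq_zero_or_pos (min x y) with h0 | hpos
    · omega
    · exact Or.inl ⟨x - 1, y - 1, by omega, by omega, by omega⟩
  · rintro (⟨a, b, hab, rfl, rfl⟩ | h) <;> omega

lemma ncard_terminalSet (k : ℕ) :
    (terminalSet k).ncard = (terminalSet (k - 3)).ncard + (2 * k - 1) := by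
  have hdisj : Disjoint (Prod.map Nat.succ Nat.succ '' terminalSet (k - 3)) ↑(hook k) := by
    rw [Set.disjoint_left]
    rintro _ ⟨⟨a, b⟩, -, rfl⟩ h
    simp only [hook, Prod.map, coe_union, coe_product, coe_range, coe_singleton, coe_Ico,
      Set.mem_union, Set.mem_prod, Set.mem_Iio, Set.mem_singleton_iff, Set.mem_Ico] at h
    omega
  rw [terminalSet_eq_image_union_hook k,
    Set.ncard_union_eq hdisj ((terminalSet_finite _).image _) (finite_toSet _),
    Set.ncard_image_of_injective _
      (Prod.map_injective.2 ⟨Nat.succ_injective, Nat.succ_injective⟩),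
    Set.ncard_coe_finset, card_hook]

/-- Counting the terminal positions of Blocking-k Wythoff Nim. -/
theorem terminalSet_card (m : ℕ) :
    (terminalSet (3 * m + 1)).ncard = 3 * (m + 1) ^ 2 - 2 * (m + 1) ∧
    (terminalSet (3 * m + 2)).ncard = 3 * (m + 1) ^ 2 ∧
    (terminalSet (3 * (m + 1))).ncard = 3 * (m + 1) ^ 2 + 2 * (m + 1) := by
  induction m with
  | zero => refine ⟨?_, ?_, ?_⟩ <;> rw [ncard_terminalSet] <;> simp [terminalSet_zero]
  | succ m ih =>
    obtain ⟨h₁, h₂, h₃⟩ := ih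
    have hsq : (m + 1 + 1) ^ 2 = (m + 1) ^ 2 + 2 * m + 3 := by ring
    have hle : m + 1 ≤ (m + 1) ^ 2 := Nat.le_self_pow two_ne_zero _
    refine ⟨?_, ?_, ?_⟩
    · rw [ncard_terminalSet, show 3 * (m + 1) + 1 - 3 = 3 * m + 1 by omega, h₁, hsq]; omega
    · rw [ncard_terminalSet, show 3 * (m + 1) + 2 - 3 = 3 * m + 2 by omega, h₂, hsq]; omega
    · rw [ncard_terminalSet, show 3 * (m + 1 + 1) - 3 = 3 * (m + 1) by omega, h₃, hsq]; omega
end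

section
/- Define the P-positions of Blocking-k Wythoff Nim recursively: a position is P if strictly fewer than k of its Wythoff Nim options are P. For k = 3, the set of P-positions equals R₃ = {(0,0)} ∪ {(n,2n+1),(2n+1,n),(n,2n+2),(2n+2,n) : n ∈ ℕ₀}. -/
/-- `q` is a Wythoff Nim option of `p`: a horizontal, vertical or diagonal move. -/
def IsOption (q p : ℕ × ℕ) : Prop :=
  (q.1 < p.1 ∧ q.2 = p.2) ∨ (q.1 = p.1 ∧ q.2 < p.2) ∨
  (q.1 < p.1 ∧ q.2 < p.2 ∧ p.1 - q.1 = p.2 - q.2)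

lemma IsOption.sum_lt {q p : ℕ × ℕ} (h : IsOption q p) : q.1 + q.2 < p.1 + p.2 := by
  rcases h with ⟨h1, h2⟩ | ⟨h1, h2⟩ | ⟨h1, h2, _⟩ <;> omega

/-- A position of Blocking-k Wythoff Nim is a P-position iff strictly fewer than
`k` of its options are P-positions. -/
def IsP (k : ℕ) (p : ℕ × ℕ) : Prop :=
  Set.ncard {q : ℕ × ℕ | ∃ _ : IsOption q p, IsP k q} < k
termination_by p.1 + p.2
decreasing_by exact IsOption.sum_lt ‹_›

/-- The candidate set of P-positions of Blocking-3 Wythoff Nim. -/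
def R3 : Set (ℕ × ℕ) :=
  {(0, 0)} ∪
  {p | ∃ n : ℕ, p = (n, 2 * n + 1) ∨ p = (2 * n + 1, n) ∨
                p = (n, 2 * n + 2) ∨ p = (2 * n + 2, n)}

lemma isOption_iff {u v x y : ℕ} :
    IsOption (u, v) (x, y) ↔
      (u < x ∧ v = y) ∨ (u = x ∧ v < y) ∨ (u < x ∧ v < y ∧ x - u = y - v) := Iff.rfl

lemma mem_R3_iff {x y : ℕ} :
    (x, y) ∈ R3 ↔
      (x = 0 ∧ y = 0) ∨ y = 2*x+1 ∨ x = 2*y+1 ∨ y = 2*x+2 ∨ x = 2*y+2 := by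
  simp only [R3, Set.mem_union, Set.mem_singleton_iff, Set.mem_setOf_eq]
  constructor
  · rintro (h | ⟨n, h | h | h | h⟩) <;> (rw [Prod.mk.injEq] at h; omega)
  · rintro (⟨h1, h2⟩ | h | h | h | h)
    · exact Or.inl (by rw [Prod.mk.injEq]; exact ⟨h1, h2⟩)
    · exact Or.inr ⟨x, by simp only [Prod.mk.injEq, true_and, and_true]; omega⟩
    · exact Or.inr ⟨y, by simp only [Prod.mk.injEq, true_and, and_true]; omega⟩
    · exact Or.inr ⟨x, by simp only [Prod.mk.injEq, true_and, and_true]; omega⟩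
    · exact Or.inr ⟨y, by simp only [Prod.mk.injEq, true_and, and_true]; omega⟩

lemma key : ∀ N : ℕ, ∀ x y : ℕ, x + y = N → (IsP 3 (x, y) ↔ (x, y) ∈ R3) := by
  intro N
  induction N using Nat.strong_induction_on with
  | _ N ih =>
    intro x y hN
    rw [IsP]
    have hset : {q : ℕ × ℕ | ∃ _ : IsOption q (x, y), IsP 3 q} =
        {q : ℕ × ℕ | IsOption q (x, y) ∧ q ∈ R3} := by
      ext q
      simp only [Set.mem_setOf_eq, exists_prop]
      constructor
      · rintro ⟨h1, h2⟩
        exact ⟨h1, (ih (q.1 + q.2) (by have := h1.sum_lt; simp at this; omega)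
          q.1 q.2 rfl).mp (by simpa using h2)⟩
      · rintro ⟨h1, h2⟩
        exact ⟨h1, by simpa using (ih (q.1 + q.2) (by have := h1.sum_lt; simp at this; omega)
          q.1 q.2 rfl).mpr (by simpa using h2)⟩
    rw [hset]
    set S : Set (ℕ × ℕ) := {q : ℕ × ℕ | IsOption q (x, y) ∧ q ∈ R3} with hS
    have hfin : S.Finite := by
      apply Set.Finite.subset (Set.finite_Iic ((x, y) : ℕ × ℕ))
      rintro ⟨u, v⟩ ⟨hop, -⟩
      rw [isOption_iff] at hop
      simp only [Set.mem_Iic, Prod.mk_le_mk]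
      omega
    by_cases hmem : (x, y) ∈ R3
    · simp only [hmem, iff_true]
      -- S has at most 2 elements
      have hle : ∀ a b : ℕ × ℕ, S ⊆ {a, b} → S.ncard < 3 := by
        intro a b hsub
        have h1 : S.ncard ≤ ({a, b} : Set (ℕ × ℕ)).ncard :=
          Set.ncard_le_ncard hsub (Set.toFinite _)
        have h2 : ({a, b} : Set (ℕ × ℕ)).ncard ≤ 2 :=
          le_trans (Set.ncard_insert_le _ _) (by simp)
        omega
      rw [mem_R3_iff] at hmem
      rcases hmem with ⟨h1, h2⟩ | h | h | h | h
      · refine hle (0, 0) (0, 0) ?_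
        rintro ⟨u, v⟩ ⟨hop, hR⟩
        rw [isOption_iff] at hop
        simp only [Set.mem_insert_iff, Set.mem_singleton_iff, Prod.mk.injEq]
        omega
      · refine hle (x, (x - 1) / 2) (x - 1, 2 * x) ?_
        rintro ⟨u, v⟩ ⟨hop, hR⟩
        rw [isOption_iff] at hop
        rw [mem_R3_iff] at hR
        simp only [Set.mem_insert_iff, Set.mem_singleton_iff, Prod.mk.injEq]
        omega
      · refine hle ((y - 1) / 2, y) (2 * y, y - 1) ?_
        rintro ⟨u, v⟩ ⟨hop, hR⟩
        rw [isOption_iff] at hop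
        rw [mem_R3_iff] at hR
        simp only [Set.mem_insert_iff, Set.mem_singleton_iff, Prod.mk.injEq]
        omega
      · refine hle (x, 2 * x + 1) (x, (x - 1) / 2) ?_
        rintro ⟨u, v⟩ ⟨hop, hR⟩
        rw [isOption_iff] at hop
        rw [mem_R3_iff] at hR
        simp only [Set.mem_insert_iff, Set.mem_singleton_iff, Prod.mk.injEq]
        omega
      · refine hle (2 * y + 1, y) ((y - 1) / 2, y) ?_
        rintro ⟨u, v⟩ ⟨hop, hR⟩
        rw [isOption_iff] at hop
        rw [mem_R3_iff] at hR
        simp only [Set.mem_insert_iff, Set.mem_singleton_iff, Prod.mk.injEq]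
        omega
    · simp only [hmem, iff_false, not_lt]
      rw [mem_R3_iff] at hmem
      push_neg at hmem
      -- exhibit three distinct elements of S
      have hge : ∀ a b c : ℕ × ℕ, a ∈ S → b ∈ S → c ∈ S → a ≠ b → a ≠ c → b ≠ c →
          3 ≤ S.ncard := by
        intro a b c ha hb hc hab hac hbc
        have hsub : ({a, b, c} : Set (ℕ × ℕ)) ⊆ S := by
          simp only [Set.insert_subset_iff, Set.singleton_subset_iff]
          exact ⟨ha, hb, hc⟩
        have h3 : ({a, b, c} : Set (ℕ × ℕ)).ncard = 3 := by
          rw [Set.ncard_insert_of_notMem (by simp [hab, hac]),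
            Set.ncard_insert_of_notMem (by simp [hbc]), Set.ncard_singleton]
        calc 3 = ({a, b, c} : Set (ℕ × ℕ)).ncard := h3.symm
          _ ≤ S.ncard := Set.ncard_le_ncard hsub hfin
      have hmemS : ∀ u v : ℕ, IsOption (u, v) (x, y) → (u, v) ∈ R3 → (u, v) ∈ S :=
        fun u v h1 h2 => ⟨h1, h2⟩
      rcases le_or_gt x y with hxy | hxy
      · rcases le_or_gt y (2 * x) with hy | hy
        · -- x ≤ y ≤ 2x
          refine hge ((y - 1) / 2, y) (x, (x - 1) / 2) (y - x - 1, 2 * y - 2 * x - 1)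
            (hmemS _ _ (by rw [isOption_iff]; omega) (by rw [mem_R3_iff]; omega))
            (hmemS _ _ (by rw [isOption_iff]; omega) (by rw [mem_R3_iff]; omega))
            (hmemS _ _ (by rw [isOption_iff]; omega) (by rw [mem_R3_iff]; omega))
            ?_ ?_ ?_ <;> (simp only [ne_eq, Prod.mk.injEq, not_and]; omega)
        · -- y ≥ 2x+3
          refine hge (x, 2 * x + 1) (x, 2 * x + 2) (x, (x - 1) / 2)
            (hmemS _ _ (by rw [isOption_iff]; omega) (by rw [mem_R3_iff]; omega))
            (hmemS _ _ (by rw [isOption_iff]; omega) (by rw [mem_R3_iff]; omega))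
            (hmemS _ _ (by rw [isOption_iff]; omega) (by rw [mem_R3_iff]; omega))
            ?_ ?_ ?_ <;> (simp only [ne_eq, Prod.mk.injEq, not_and]; omega)
      · rcases le_or_gt x (2 * y) with hx | hx
        · -- y < x ≤ 2y
          refine hge (x, (x - 1) / 2) ((y - 1) / 2, y) (2 * x - 2 * y - 1, x - y - 1)
            (hmemS _ _ (by rw [isOption_iff]; omega) (by rw [mem_R3_iff]; omega))
            (hmemS _ _ (by rw [isOption_iff]; omega) (by rw [mem_R3_iff]; omega))
            (hmemS _ _ (by rw [isOption_iff]; omega) (by rw [mem_R3_iff]; omega))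
            ?_ ?_ ?_ <;> (simp only [ne_eq, Prod.mk.injEq, not_and]; omega)
        · -- x ≥ 2y+3
          refine hge (2 * y + 1, y) (2 * y + 2, y) ((y - 1) / 2, y)
            (hmemS _ _ (by rw [isOption_iff]; omega) (by rw [mem_R3_iff]; omega))
            (hmemS _ _ (by rw [isOption_iff]; omega) (by rw [mem_R3_iff]; omega))
            (hmemS _ _ (by rw [isOption_iff]; omega) (by rw [mem_R3_iff]; omega))
            ?_ ?_ ?_ <;> (simp only [ne_eq, Prod.mk.injEq, not_and]; omega)

/-- The P-positions of Blocking-3 Wythoff Nim are exactly R₃. -/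
theorem blocking_three_wythoff : ∀ p : ℕ × ℕ, IsP 3 p ↔ p ∈ R3 := by
  rintro ⟨x, y⟩
  exact key (x + y) x y rfl
end

section
/- Let P be the (symmetric) set of P-positions of Blocking-k Wythoff Nim. For every d ∈ ℕ₀, the number of positions (a,b) ∈ P with a ≤ b and b − a = d is at most k. -/
/-! A P-position has fewer than `k` P-options, and any two P-positions on the same diagonal
`b - a = d` are joined by a diagonal move. So the diagonal P-position with the largest first
coordinate has all the others among its P-options, which leaves room for at most `k` of them. -/

lemma IsOption.le {q p : ℕ × ℕ} (h : IsOption q p) : q ≤ p := by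
  rcases h with ⟨h1, h2⟩ | ⟨h1, h2⟩ | ⟨h1, h2, _⟩ <;> exact ⟨by omega, by omega⟩

lemma isOption_of_lt_of_sub_eq {q p : ℕ × ℕ} (hq : q.1 ≤ q.2) (hp : p.1 ≤ p.2)
    (hsub : q.2 - q.1 = p.2 - p.1) (hlt : q.1 < p.1) : IsOption q p :=
  Or.inr (Or.inr ⟨hlt, by omega, by omega⟩)

def pOptions (k : ℕ) (p : ℕ × ℕ) : Set (ℕ × ℕ) :=
  {q : ℕ × ℕ | ∃ _ : IsOption q p, IsP k q}

lemma isP_iff_ncard_pOptions_lt (k : ℕ) (p : ℕ × ℕ) : IsP k p ↔ (pOptions k p).ncard < k := by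
  rw [IsP, pOptions]

lemma finite_pOptions (k : ℕ) (p : ℕ × ℕ) : (pOptions k p).Finite :=
  (Set.finite_Iic p).subset fun _ ⟨hq, _⟩ ↦ hq.le

lemma ncard_le_of_subset_insert_pOptions {k : ℕ} {p : ℕ × ℕ} {T : Set (ℕ × ℕ)} (hp : IsP k p)
    (hT : T ⊆ insert p (pOptions k p)) : T.ncard ≤ k :=
  calc T.ncard ≤ (insert p (pOptions k p)).ncard :=
        Set.ncard_le_ncard hT ((finite_pOptions k p).insert p)
    _ ≤ (pOptions k p).ncard + 1 := Set.ncard_insert_le p _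
    _ ≤ k := (isP_iff_ncard_pOptions_lt k p).mp hp

theorem blocking_wythoff_diag_bound_general (k : ℕ) (d : ℕ) :
    {p : ℕ × ℕ | IsP k p ∧ p.1 ≤ p.2 ∧ p.2 - p.1 = d}.ncard ≤ k := by
  set T : Set (ℕ × ℕ) := {p : ℕ × ℕ | IsP k p ∧ p.1 ≤ p.2 ∧ p.2 - p.1 = d}
  by_contra! hT
  have hT0 : T.ncard ≠ 0 := by omega
  obtain ⟨p, ⟨hpP, hp_le, hp_d⟩, hmax⟩ := Set.exists_max_image T Prod.fst
    (Set.finite_of_ncard_ne_zero hT0) (Set.nonempty_of_ncard_ne_zero hT0)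
  have hsub : T ⊆ insert p (pOptions k p) := by
    intro q hq
    have hq_fst := hmax q hq
    obtain ⟨hqP, hq_le, hq_d⟩ := hq
    rcases hq_fst.lt_or_eq with hlt | heq
    · exact Or.inr ⟨isOption_of_lt_of_sub_eq hq_le hp_le (hq_d.trans hp_d.symm) hlt, hqP⟩
    · exact Or.inl (Prod.ext heq (by omega))
  exact (ncard_le_of_subset_insert_pOptions hpP hsub).not_gt hT

/-- For every d, at most k P-positions (a,b) of Blocking-k Wythoff Nim with a ≤ b
satisfy b − a = d. -/
theorem blocking_wythoff_diag_bound (k : ℕ) (hk : 0 < k) (d : ℕ) :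
    {p : ℕ × ℕ | IsP k p ∧ p.1 ≤ p.2 ∧ p.2 - p.1 = d}.ncard ≤ k :=
  blocking_wythoff_diag_bound_general k d
end
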